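/- For all real β > √2 and all α > 0, the function z ↦ θ(α; z) − β·θ(2α; z) is unbounded below on the upper half plane ℍ; in particular its infimum over ℍ is −∞ and the minimum does not exist. Specifically, along z = 1/2 + iy as y → ∞, θ(α; z) − β·θ(2α; z) = √(y/(2α))·(√2 − β + o(1)) → −∞. -/

import Mathlib

/-!
Write `z = x + iy`. Since `|mz + n|² = (n + mx)² + m²y²`, `θ(a; z)` is a lattice Gaussian sum
whose row `m = 0` is `Σₙ exp(-(aπ/y) n²)`; Poisson summation turns it into
`√(y/a) Σₙ exp(-(πy/a) n²) = √(y/a) (1 + o(1))`. The rows `m ≠ 0` carry the factor `exp(-aπy m²)`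
and, by `(n + t)² ≥ n²/2 - t²`, contribute only `O(√y exp(-aπ(y - x²/y)))`. Hence
`θ(a; x + iy) ~ √(y/a)` as `y → ∞`, and `θ(α; z) - β θ(2α; z) ~ √(y/α) (1 - β/√2) → -∞`.
-/

open Real Filter

/-- The two-dimensional theta function `θ(α; z) = Σ_{(m,n)∈ℤ²} exp(−(απ/y)|mz+n|²)`. -/
noncomputable def theta (α : ℝ) (z : ℂ) : ℝ :=
  ∑' p : ℤ × ℤ, Real.exp (-(α * π / z.im) * ‖(p.1 : ℂ) * z + (p.2 : ℂ)‖ ^ 2)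

open Topology

noncomputable def gaussianSum (b : ℝ) : ℝ := ∑' n : ℤ, rexp (-b * n ^ 2)

section gaussianSum

variable {b : ℝ}

lemma summable_exp_neg_mul_int_sq (hb : 0 < b) : Summable fun n : ℤ => rexp (-b * n ^ 2) := by
  have hT : 0 < b / π := div_pos hb pi_pos
  refine (summable_pow_mul_jacobiTheta₂_term_bound 0 hT 0).congr fun n => ?_
  simp only [pow_zero, one_mul, mul_zero, zero_mul, sub_zero]
  congr 1
  field_simp

lemma gaussianSum_pi_div {s : ℝ} (hs : 0 < s) : gaussianSum (π / s) = √s * gaussianSum (π * s) := by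
  have h := Real.tsum_exp_neg_mul_int_sq (inv_pos.mpr hs)
  rwa [← sqrt_eq_rpow, one_div, ← sqrt_inv, inv_inv, div_inv_eq_mul, ← div_eq_mul_inv, neg_div,
    neg_mul] at h

lemma tendsto_gaussianSum_atTop : Tendsto gaussianSum atTop (𝓝 1) := by
  have hlim : ∀ n : ℤ, Tendsto (fun b => rexp (-b * n ^ 2)) atTop (𝓝 (if n = 0 then 1 else 0)) := by
    intro n
    split_ifs with hn
    · simp [hn]
    · exact tendsto_exp_atBot.comp (tendsto_neg_atTop_atBot.atBot_mul_const (by positivity))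
  have hbound : ∀ᶠ b in atTop, ∀ n : ℤ, ‖rexp (-b * n ^ 2)‖ ≤ rexp (-1 * n ^ 2) := by
    filter_upwards [eventually_ge_atTop 1] with b hb n
    rw [norm_of_nonneg (exp_pos _).le, exp_le_exp]
    nlinarith [sq_nonneg (n : ℝ)]
  have h := tendsto_tsum_of_dominated_convergence (summable_exp_neg_mul_int_sq one_pos) hlim hbound
  rwa [tsum_ite_eq] at h

lemma exp_neg_mul_add_sq_le {c : ℝ} (hc : 0 ≤ c) (s t : ℝ) :
    rexp (-c * (s + t) ^ 2) ≤ rexp (c * t ^ 2) * rexp (-(c / 2) * s ^ 2) := by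
  rw [← exp_add, exp_le_exp]
  nlinarith [mul_nonneg hc (sq_nonneg (s + 2 * t))]

end gaussianSum

noncomputable def latticeGaussianSum (k c t : ℝ) : ℝ :=
  ∑' p : ℤ × ℤ, rexp (-k * p.1 ^ 2) * rexp (-c * (p.2 + p.1 * t) ^ 2)

section latticeGaussianSum

variable {k c t : ℝ}

lemma exp_lattice_term_le (hc : 0 ≤ c) (m n : ℤ) :
    rexp (-k * m ^ 2) * rexp (-c * (n + m * t) ^ 2) ≤
      rexp (-(k - c * t ^ 2) * m ^ 2) * rexp (-(c / 2) * n ^ 2) := by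
  calc rexp (-k * m ^ 2) * rexp (-c * (n + m * t) ^ 2)
      ≤ rexp (-k * m ^ 2) * (rexp (c * (m * t) ^ 2) * rexp (-(c / 2) * n ^ 2)) := by
        gcongr; exact exp_neg_mul_add_sq_le hc _ _
    _ = rexp (-(k - c * t ^ 2) * m ^ 2) * rexp (-(c / 2) * n ^ 2) := by
        rw [← mul_assoc, ← exp_add]; ring_nf

variable (hc : 0 < c) (hk : 0 < k - c * t ^ 2)
include hc hk

lemma summable_lattice_term :
    Summable fun p : ℤ × ℤ => rexp (-k * p.1 ^ 2) * rexp (-c * (p.2 + p.1 * t) ^ 2) :=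
  .of_nonneg_of_le (fun _ => by positivity) (fun p => exp_lattice_term_le hc.le p.1 p.2)
    ((summable_exp_neg_mul_int_sq hk).mul_of_nonneg (summable_exp_neg_mul_int_sq (by positivity))
      (fun _ => (exp_pos _).le) fun _ => (exp_pos _).le)

lemma hasSum_latticeGaussianSum :
    HasSum (fun m : ℤ => rexp (-k * m ^ 2) * ∑' n : ℤ, rexp (-c * (n + m * t) ^ 2))
      (latticeGaussianSum k c t) := by
  have h := summable_lattice_term hc hk
  simp_rw [← tsum_mul_left]
  rw [latticeGaussianSum, h.tsum_prod' h.prod_factor]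
  exact h.prod.hasSum

lemma gaussianSum_le_latticeGaussianSum : gaussianSum c ≤ latticeGaussianSum k c t := by
  have h := hasSum_latticeGaussianSum hc hk
  rw [← h.tsum_eq]
  simpa [gaussianSum] using h.summable.le_tsum 0 fun _ _ => by positivity

lemma latticeGaussianSum_le :
    latticeGaussianSum k c t ≤
      gaussianSum c + (gaussianSum (k - c * t ^ 2) - 1) * gaussianSum (c / 2) := by
  have hc2 : 0 < c / 2 := by positivity
  have hrow (s : ℝ) :
      ∑' n : ℤ, rexp (-c * (n + s) ^ 2) ≤ rexp (c * s ^ 2) * gaussianSum (c / 2) := by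
    have hdom := (summable_exp_neg_mul_int_sq hc2).mul_left (rexp (c * s ^ 2))
    rw [gaussianSum, ← tsum_mul_left]
    exact Summable.tsum_le_tsum (fun n => exp_neg_mul_add_sq_le hc.le _ _)
      (.of_nonneg_of_le (fun _ => (exp_pos _).le) (fun _ => exp_neg_mul_add_sq_le hc.le _ _) hdom)
      hdom
  have hu := hasSum_ite_sub_hasSum (hasSum_latticeGaussianSum hc hk) 0
  have hv := hasSum_ite_sub_hasSum
    (((summable_exp_neg_mul_int_sq hk).hasSum).mul_right (gaussianSum (c / 2))) 0
  have hle := hasSum_le (fun m => ?_) hu hv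
  · simp only [Int.cast_zero, ne_eq, OfNat.ofNat_ne_zero, not_false_eq_true, zero_pow, mul_zero,
      zero_mul, add_zero, exp_zero, one_mul] at hle
    rw [← gaussianSum, ← gaussianSum] at hle
    linarith
  · split_ifs
    · rfl
    · calc rexp (-k * m ^ 2) * ∑' n : ℤ, rexp (-c * (n + m * t) ^ 2)
          ≤ rexp (-k * m ^ 2) * (rexp (c * (m * t) ^ 2) * gaussianSum (c / 2)) := by
            gcongr; exact hrow _
        _ = rexp (-(k - c * t ^ 2) * m ^ 2) * gaussianSum (c / 2) := by
            rw [← mul_assoc, ← exp_add]; ring_nf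

end latticeGaussianSum

section theta

variable {a x y : ℝ}

lemma theta_eq_latticeGaussianSum (hy : 0 < y) :
    theta a ⟨x, y⟩ = latticeGaussianSum (a * π * y) (a * π / y) x := by
  refine tsum_congr fun p => ?_
  rw [← exp_add, Complex.sq_norm, Complex.normSq_apply]
  simp only [Complex.add_re, Complex.add_im, Complex.mul_re, Complex.mul_im,
    Complex.intCast_re, Complex.intCast_im]
  congr 1
  field_simp
  ring

variable (ha : 0 < a) (hy : 0 < y) (hxy : x ^ 2 < y ^ 2)
include ha hy hxy

lemma theta_exponent_pos : 0 < a * π * y - a * π / y * x ^ 2 := by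
  have h : a * π * y - a * π / y * x ^ 2 = a * π / y * (y ^ 2 - x ^ 2) := by field_simp
  rw [h]
  exact mul_pos (by positivity) (sub_pos.mpr hxy)

lemma sqrt_mul_gaussianSum_le_theta : √(y / a) * gaussianSum (π * (y / a)) ≤ theta a ⟨x, y⟩ := by
  rw [theta_eq_latticeGaussianSum hy, ← gaussianSum_pi_div (by positivity),
    show π / (y / a) = a * π / y by field_simp]
  exact gaussianSum_le_latticeGaussianSum (by positivity) (theta_exponent_pos ha hy hxy)

lemma theta_le_sqrt_mul :
    theta a ⟨x, y⟩ ≤ √(y / a) * (gaussianSum (π * (y / a)) +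
      (gaussianSum (a * π * y - a * π / y * x ^ 2) - 1) *
        (√2 * gaussianSum (π * (2 * y / a)))) := by
  have hc : 0 < a * π / y := by positivity
  have hc1 : a * π / y = π / (y / a) := by field_simp
  have hc2 : a * π / y / 2 = π / (2 * y / a) := by field_simp
  have hsqrt : √(2 * y / a) = √2 * √(y / a) := by rw [mul_div_assoc, sqrt_mul zero_le_two]
  rw [theta_eq_latticeGaussianSum hy]
  refine (latticeGaussianSum_le hc (theta_exponent_pos ha hy hxy)).trans_eq ?_
  rw [hc2, gaussianSum_pi_div (by positivity), hsqrt, hc1, gaussianSum_pi_div (by positivity)]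
  ring

end theta

theorem tendsto_theta_div_sqrt (x : ℝ) {a : ℝ} (ha : 0 < a) :
    Tendsto (fun y => theta a ⟨x, y⟩ / √(y / a)) atTop (𝓝 1) := by
  have hG {f : ℝ → ℝ} (hf : Tendsto f atTop atTop) :
      Tendsto (fun y => gaussianSum (f y)) atTop (𝓝 1) :=
    tendsto_gaussianSum_atTop.comp hf
  have h1 : Tendsto (fun y => π * (y / a)) atTop atTop :=
    (tendsto_id.atTop_div_const ha).const_mul_atTop pi_pos
  have h2 : Tendsto (fun y => π * (2 * y / a)) atTop atTop :=
    ((tendsto_id.const_mul_atTop two_pos).atTop_div_const ha).const_mul_atTop pi_pos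
  have h3 : Tendsto (fun y => a * π * y - a * π / y * x ^ 2) atTop atTop := by
    have hdecay : Tendsto (fun y => a * π / y * x ^ 2) atTop (𝓝 0) := by
      simpa using (tendsto_const_nhds.div_atTop tendsto_id).mul_const (x ^ 2)
    simpa [sub_eq_add_neg] using
      (tendsto_id.const_mul_atTop (by positivity)).atTop_add hdecay.neg
  have hupper := (hG h1).add (((hG h3).sub_const 1).mul ((hG h2).const_mul √2))
  rw [sub_self, zero_mul, add_zero] at hupper
  have hlarge : ∀ᶠ y in atTop, 0 < y ∧ x ^ 2 < y ^ 2 := by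
    filter_upwards [eventually_gt_atTop |x|] with y hy
    exact ⟨(abs_nonneg x).trans_lt hy, sq_lt_sq' (neg_lt_of_abs_lt hy) (lt_of_abs_lt hy)⟩
  refine tendsto_of_tendsto_of_tendsto_of_le_of_le' (hG h1) hupper ?_ ?_ <;>
    filter_upwards [hlarge] with y ⟨hy, hxy⟩ <;> have hs : 0 < √(y / a) := by positivity
  · rw [le_div_iff₀ hs, mul_comm]
    exact sqrt_mul_gaussianSum_le_theta ha hy hxy
  · rw [div_le_iff₀ hs, mul_comm]
    exact theta_le_sqrt_mul ha hy hxy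

theorem tendsto_theta_sub_mul_theta_atBot (x : ℝ) {a β : ℝ} (ha : 0 < a) (hβ : √2 < β) :
    Tendsto (fun y => theta a ⟨x, y⟩ - β * theta (2 * a) ⟨x, y⟩) atTop atBot := by
  have hsqrt : Tendsto (fun y => √(y / a)) atTop atTop :=
    tendsto_sqrt_atTop.comp (tendsto_id.atTop_div_const ha)
  have hratio := (tendsto_theta_div_sqrt x ha).sub
    ((tendsto_theta_div_sqrt x (by positivity : 0 < 2 * a)).const_mul (β / √2))
  have hneg : 1 - β / √2 * 1 < 0 := by
    rw [mul_one, sub_neg, one_lt_div (by positivity)]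
    exact hβ
  refine (hsqrt.atTop_mul_neg hneg hratio).congr' ?_
  filter_upwards [eventually_gt_atTop 0] with y hy
  have hs : 0 < √(y / a) := by positivity
  rw [show y / (2 * a) = y / a / 2 by ring, sqrt_div' _ zero_le_two]
  field_simp

theorem no_minimizer_of_sqrt_two_lt (α β : ℝ) (hα : 0 < α) (hβ : Real.sqrt 2 < β) :
    (∀ M : ℝ, ∃ z : ℂ, 0 < z.im ∧ theta α z - β * theta (2 * α) z < M) ∧
    Tendsto (fun y : ℝ =>
        theta α (⟨1 / 2, y⟩ : ℂ) - β * theta (2 * α) (⟨1 / 2, y⟩ : ℂ))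
      atTop atBot := by
  have hlim := tendsto_theta_sub_mul_theta_atBot (1 / 2) hα hβ
  refine ⟨fun M => ?_, hlim⟩
  obtain ⟨y, hyM, hy⟩ :=
    ((hlim.eventually (eventually_lt_atBot M)).and (eventually_gt_atTop 0)).exists
  exact ⟨⟨1 / 2, y⟩, hy, hyM⟩
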